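/- arXiv:2405.00262 — 3 statements merged into one kernel-verified Lean document; each statement's English description precedes it below -/
import Mathlib

section
/- Given a simple undirected graph G with m edges whose edge set can be decomposed into at most α forests, the sum over all edges {u,v} of min(deg(u), deg(v)) is at most 2·m·α. -/
/-!
Every forest admits an injective choice of one endpoint per edge: root each component and send
each edge to its endpoint farther from the root; in a forest a vertex has only one neighbour
closer to the root, so no vertex is chosen twice. Hence the edges of a forest contribute at most
`∑ v, deg v = 2m` to the sum of minimum endpoint degrees, and covering the edges of `G` by `α`
forests gives `2mα`.
-/

open Finset SimpleGraph

def minDeg {V : Type*} [Fintype V] (G : SimpleGraph V) [DecidableRel G.Adj]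
    (e : Sym2 V) : ℕ :=
  Sym2.lift ⟨fun u v => min (G.degree u) (G.degree v), fun _ _ => min_comm _ _⟩ e

theorem Finset.sum_le_sum_sum_of_forall_exists_mem {ι α M : Type*} [Fintype ι]
    [AddCommMonoid M] [PartialOrder M] [CanonicallyOrderedAdd M] [AddLeftMono M]
    {s : Finset α} {t : ι → Finset α} {f : α → M} (h : ∀ a ∈ s, ∃ i, a ∈ t i) :
    ∑ a ∈ s, f a ≤ ∑ i, ∑ a ∈ t i, f a := by
  classical
  calc ∑ a ∈ s, f a ≤ ∑ a ∈ univ.sup t, f a :=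
        sum_le_sum_of_subset fun a ha => by simpa using h a ha
    _ ≤ ∑ i, ∑ a ∈ t i, f a :=
        univ.apply_sup_le_sum (f := fun u => ∑ a ∈ u, f a) sum_empty fun {u v} =>
          le_self_add.trans (sum_union_inter (s₁ := u) (s₂ := v)).le

namespace SimpleGraph

variable {V : Type*} {H : SimpleGraph V}

theorem IsAcyclic.eq_of_adj_of_dist_lt (hH : H.IsAcyclic) {r x y y' : V} (hr : H.Reachable r x)
    (hy : H.Adj x y) (hy' : H.Adj x y') (hdy : H.dist r y < H.dist r x)
    (hdy' : H.dist r y' < H.dist r x) : y = y' := by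
  classical
  obtain ⟨p, hp⟩ := hr.exists_isPath
  suffices ∀ z, H.Adj x z → H.dist r z < H.dist r x → z = p.penultimate from
    (this y hy hdy).trans (this y' hy' hdy').symm
  intro z hz hdz
  obtain ⟨q, hq, hql⟩ := (hr.trans hz.reachable).exists_path_of_dist
  have hx : x ∉ q.support := fun hx =>
    ((dist_le (q.takeUntil x hx)).trans (q.length_takeUntil_le_length hx)).not_gt (hql ▸ hdz)
  exact hH.eq_penultimate_of_adj_end hp hz
    (hH.mem_support_of_ne_mem_support_of_adj_of_isPath hp hq hz hx)

theorem IsAcyclic.exists_injOn_edgeSet_mem (hH : H.IsAcyclic) :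
    ∃ f : Sym2 V → V, (∀ e ∈ H.edgeSet, f e ∈ e) ∧ Set.InjOn f H.edgeSet := by
  let root : V → V := fun x => (H.connectedComponentMk x).out
  have hroot (x : V) : H.Reachable (root x) x :=
    ConnectedComponent.exact (Quot.out_eq (H.connectedComponentMk x))
  have hparent : ∀ e, ∃ x, e ∈ H.edgeSet →
      ∃ y, e = s(x, y) ∧ H.Adj x y ∧ H.dist (root x) y < H.dist (root x) x := by
    refine Sym2.ind fun u v => ?_
    by_cases huv : H.Adj u v
    · have hroot_eq : root v = root u := by
        simp only [root, ConnectedComponent.sound huv.symm.reachable]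
      rcases Nat.lt_or_gt_of_ne (hH.dist_ne_of_adj huv (hroot u)) with h | h
      · exact ⟨v, fun _ => ⟨u, Sym2.eq_swap, huv.symm, hroot_eq ▸ h⟩⟩
      · exact ⟨u, fun _ => ⟨v, rfl, huv, h⟩⟩
    · exact ⟨u, fun he => absurd he huv⟩
  choose f hf using hparent
  refine ⟨f, fun e he => ?_, fun e he e' he' hee' => ?_⟩
  · obtain ⟨y, hey, -⟩ := hf e he
    exact ⟨y, hey⟩
  · obtain ⟨y, hey, hy, hdy⟩ := hf e he
    obtain ⟨y', hey', hy', hdy'⟩ := hf e' he'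
    rw [← hee'] at hey' hy' hdy'
    rw [hey, hey', hH.eq_of_adj_of_dist_lt (hroot _) hy hy' hdy hdy']

end SimpleGraph

theorem minDeg_le_degree {V : Type*} [Fintype V] (G : SimpleGraph V) [DecidableRel G.Adj]
    {e : Sym2 V} {v : V} (hv : v ∈ e) : minDeg G e ≤ G.degree v := by
  induction e using Sym2.ind with
  | h a b =>
    rcases Sym2.mem_iff.1 hv with rfl | rfl
    · exact min_le_left _ _
    · exact min_le_right _ _

theorem sum_minDeg_le_sum_degree_of_isAcyclic {V : Type*} [Fintype V] (G H : SimpleGraph V)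
    [DecidableRel G.Adj] [Fintype H.edgeSet] (hH : H.IsAcyclic) :
    ∑ e ∈ H.edgeFinset, minDeg G e ≤ ∑ v, G.degree v := by
  classical
  obtain ⟨f, hf_mem, hf_inj⟩ := hH.exists_injOn_edgeSet_mem
  calc ∑ e ∈ H.edgeFinset, minDeg G e ≤ ∑ e ∈ H.edgeFinset, G.degree (f e) :=
        sum_le_sum fun e he => minDeg_le_degree G (hf_mem e (mem_edgeFinset.1 he))
    _ = ∑ v ∈ H.edgeFinset.image f, G.degree v := by
        rw [sum_image (by rwa [coe_edgeFinset])]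
    _ ≤ ∑ v, G.degree v := sum_le_sum_of_subset (subset_univ _)

theorem sum_min_degree_le_of_forest_decomposition_general
    {V : Type*} [Fintype V] (G : SimpleGraph V) [DecidableRel G.Adj]
    (α : ℕ) (F : Fin α → SimpleGraph V)
    (hforest : ∀ i, (F i).IsAcyclic)
    (hpart : ∀ e ∈ G.edgeSet, ∃! i, e ∈ (F i).edgeSet) :
    ∑ e ∈ G.edgeFinset, minDeg G e ≤ 2 * G.edgeFinset.card * α := by
  classical
  calc ∑ e ∈ G.edgeFinset, minDeg G e ≤ ∑ i, ∑ e ∈ (F i).edgeFinset, minDeg G e :=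
        sum_le_sum_sum_of_forall_exists_mem fun e he =>
          (hpart e (mem_edgeFinset.1 he)).exists.imp fun _ => mem_edgeFinset.2
    _ ≤ ∑ _i : Fin α, 2 * G.edgeFinset.card := sum_le_sum fun i _ =>
        (sum_minDeg_le_sum_degree_of_isAcyclic G (F i) (hforest i)).trans_eq
          G.sum_degrees_eq_twice_card_edges
    _ = 2 * G.edgeFinset.card * α := by simp [mul_comm]

/-- Chiba–Nishizeki: if the edges of `G` decompose into `α` forests, then the sum over
all edges of the minimum endpoint degree is at most `2 * m * α`. -/
theorem sum_min_degree_le_of_forest_decomposition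
    {V : Type*} [Fintype V] [DecidableEq V] (G : SimpleGraph V) [DecidableRel G.Adj]
    (α : ℕ) (F : Fin α → SimpleGraph V)
    (hle : ∀ i, F i ≤ G)
    (hforest : ∀ i, (F i).IsAcyclic)
    (hpart : ∀ e ∈ G.edgeSet, ∃! i, e ∈ (F i).edgeSet) :
    ∑ e ∈ G.edgeFinset, minDeg G e ≤ 2 * G.edgeFinset.card * α :=
  sum_min_degree_le_of_forest_decomposition_general G α F hforest hpart
end

section
/- In a finite simple undirected graph of arboricity α, the number of triangles is at most (2/3)·m·α, i.e., 3·(number of triangles) ≤ 2·m·α. -/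
/-!
A triangle `t` has three edges, so `3 · #triangles ≤ ∑ₑ τ(e)`, where `τ(e)` counts the triangles
through the edge `e = uv`; and `τ(e) ≤ min (deg u) (deg v)`, since the third vertex is a common
neighbour. In a forest, sending each edge to its endpoint farther from a root of its component is
injective, so `∑ τ(e) ≤ ∑ᵥ deg v = 2m` over the edges of each of the `α` forests covering `G`.
-/

open Finset

theorem Finset.sum_le_sum_sum_filter_of_forall_exists {ι α M : Type*} [Fintype ι]
    [AddCommMonoid M] [PartialOrder M] [CanonicallyOrderedAdd M] {s : Finset α}
    {p : ι → α → Prop} [∀ i, DecidablePred (p i)] (h : ∀ a ∈ s, ∃ i, p i a) (f : α → M) :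
    ∑ a ∈ s, f a ≤ ∑ i, ∑ a ∈ s with p i a, f a := by
  calc ∑ a ∈ s, f a ≤ ∑ a ∈ s, ∑ i, if p i a then f a else 0 :=
        sum_le_sum fun a ha => by
          obtain ⟨i, hi⟩ := h a ha
          simpa only [if_pos hi] using
            single_le_sum (f := fun j => if p j a then f a else 0) (fun _ _ => zero_le) (mem_univ i)
    _ = ∑ i, ∑ a ∈ s with p i a, f a := by simp only [sum_comm (s := s), sum_filter]

namespace SimpleGraph

variable {V : Type*}

theorem IsAcyclic.eq_of_adj_of_dist_eq_add_one {F : SimpleGraph V} (hF : F.IsAcyclic)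
    {r x y₁ y₂ : V} (h₁ : F.Adj y₁ x) (h₂ : F.Adj y₂ x) (hr₁ : F.Reachable r y₁)
    (hr₂ : F.Reachable r y₂) (hd₁ : F.dist r x = F.dist r y₁ + 1)
    (hd₂ : F.dist r x = F.dist r y₂ + 1) : y₁ = y₂ := by
  obtain ⟨p₁, -, hp₁⟩ := hr₁.exists_path_of_dist
  obtain ⟨p₂, -, hp₂⟩ := hr₂.exists_path_of_dist
  have hq₁ := (p₁.concat h₁).isPath_of_length_eq_dist (by rw [p₁.length_concat, hp₁, hd₁])
  have hq₂ := (p₂.concat h₂).isPath_of_length_eq_dist (by rw [p₂.length_concat, hp₂, hd₂])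
  have hq : p₁.concat h₁ = p₂.concat h₂ :=
    congrArg Subtype.val ((hF.subsingleton_path r x).elim ⟨_, hq₁⟩ ⟨_, hq₂⟩)
  simpa only [Walk.penultimate_concat] using congrArg Walk.penultimate hq

/- `c e` is the endpoint of `e` farther from a chosen root of its component; the other endpoint
is then the unique neighbour of `c e` one step closer to the root, so `c` is injective. -/
theorem IsAcyclic.exists_injOn_edgeSet {F : SimpleGraph V} (hF : F.IsAcyclic) :
    ∃ c : Sym2 V → V, Set.InjOn c F.edgeSet ∧ ∀ e ∈ F.edgeSet, c e ∈ e := by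
  let root : V → V := fun v => (F.connectedComponentMk v).out
  have hroot : ∀ v, F.Reachable (root v) v := fun v => ConnectedComponent.exact (Quot.out_eq _)
  have hroot_adj : ∀ {u v}, F.Adj u v → root u = root v := fun h => by
    simp only [root, ConnectedComponent.sound h.reachable]
  let d : V → ℕ := fun v => F.dist (root v) v
  have hstep : ∀ {a b}, F.Adj a b → d a = d b + 1 ∨ d b = d a + 1 := fun {a b} h => by
    simpa only [d, hroot_adj h] using
      hF.dist_eq_dist_add_one_of_adj_of_reachable (root b) h (hroot_adj h ▸ hroot a)
  have hfar : ∀ e : Sym2 V, ∃ x y, e = s(x, y) ∧ (F.Adj x y → d x = d y + 1) := by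
    refine Sym2.ind fun a b => ?_
    by_cases hab : d a = d b + 1
    · exact ⟨a, b, rfl, fun _ => hab⟩
    · exact ⟨b, a, Sym2.eq_swap, fun h => (hstep h).resolve_right hab⟩
  choose c y hcy hd using hfar
  have hparent : ∀ e ∈ F.edgeSet, F.Adj (y e) (c e) ∧ F.Reachable (root (c e)) (y e) ∧
      F.dist (root (c e)) (c e) = F.dist (root (c e)) (y e) + 1 := fun e he => by
    have h : F.Adj (c e) (y e) := by rw [← mem_edgeSet, ← hcy]; exact he
    refine ⟨h.symm, hroot_adj h ▸ hroot _, ?_⟩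
    simpa only [d, hroot_adj h] using hd e h
  refine ⟨c, fun e₁ he₁ e₂ he₂ hc => ?_, fun e _ => ?_⟩
  · obtain ⟨h₁, hr₁, hd₁⟩ := hparent e₁ he₁
    obtain ⟨h₂, hr₂, hd₂⟩ := hparent e₂ he₂
    rw [hc] at h₁ hr₁ hd₁
    rw [hcy e₁, hcy e₂, hc, hF.eq_of_adj_of_dist_eq_add_one h₁ h₂ hr₁ hr₂ hd₁ hd₂]
  · have h := Sym2.mem_mk_left (c e) (y e)
    rwa [← hcy e] at h

theorem IsAcyclic.sum_le_sum_of_subset_edgeSet [Fintype V] [DecidableEq V] {M : Type*}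
    [AddCommMonoid M] [PartialOrder M] [CanonicallyOrderedAdd M] {F : SimpleGraph V}
    (hF : F.IsAcyclic) {s : Finset (Sym2 V)} (hs : ↑s ⊆ F.edgeSet) {g : Sym2 V → M} {w : V → M}
    (hgw : ∀ e ∈ s, ∀ v ∈ e, g e ≤ w v) : ∑ e ∈ s, g e ≤ ∑ v, w v := by
  obtain ⟨c, hinj, hmem⟩ := hF.exists_injOn_edgeSet
  calc ∑ e ∈ s, g e ≤ ∑ e ∈ s, w (c e) := sum_le_sum fun e he => hgw e he _ (hmem e (hs he))
    _ = ∑ v ∈ s.image c, w v := (sum_image (hinj.mono hs)).symm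
    _ ≤ ∑ v, w v := sum_le_sum_of_subset (subset_univ _)

variable [DecidableEq V] {G : SimpleGraph V}

theorem IsNClique.exists_adj_and_eq_triple {t : Finset V} {u v : V} (ht : G.IsNClique 3 t)
    (huv : u ≠ v) (hu : u ∈ t) (hv : v ∈ t) : ∃ w, G.Adj u w ∧ t = {u, v, w} := by
  rw [is3Clique_iff] at ht
  obtain ⟨a, b, c, hab, hac, hbc, rfl⟩ := ht
  simp only [mem_insert, mem_singleton] at hu hv
  rcases hu with rfl | rfl | rfl <;> rcases hv with rfl | rfl | rfl <;>
    first | exact absurd rfl huv | skip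
  exacts [⟨c, hac, rfl⟩, ⟨b, hab, by grind⟩, ⟨c, hbc, by grind⟩, ⟨a, hab.symm, by grind⟩,
    ⟨b, hbc.symm, by grind⟩, ⟨a, hac.symm, by grind⟩]

theorem IsNClique.three_le_card_filter_mem_sym2 [Fintype V] [DecidableRel G.Adj]
    {t : Finset V} (ht : G.IsNClique 3 t) : 3 ≤ #{e ∈ G.edgeFinset | e ∈ t.sym2} := by
  rw [is3Clique_iff] at ht
  obtain ⟨a, b, c, hab, hac, hbc, rfl⟩ := ht
  calc 3 = #{s(a, b), s(a, c), s(b, c)} := by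
        refine (card_eq_three.2 ⟨_, _, _, ?_, ?_, ?_, rfl⟩).symm <;> simp [hab.ne, hac.ne, hbc.ne]
    _ ≤ _ := card_le_card (by simp [insert_subset, *])

theorem card_filter_mem_sym2_cliqueFinset_le_degree [Fintype V] [DecidableRel G.Adj]
    {u v : V} (huv : u ≠ v) : #{t ∈ G.cliqueFinset 3 | s(u, v) ∈ t.sym2} ≤ G.degree u := by
  calc #{t ∈ G.cliqueFinset 3 | s(u, v) ∈ t.sym2}
      ≤ #((G.neighborFinset u).image fun w => {u, v, w}) := card_le_card fun t ht => by
        simp only [mem_filter, mem_cliqueFinset_iff, mk_mem_sym2_iff] at ht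
        obtain ⟨w, huw, rfl⟩ := ht.1.exists_adj_and_eq_triple huv ht.2.1 ht.2.2
        exact mem_image_of_mem _ ((mem_neighborFinset G u w).2 huw)
    _ ≤ G.degree u := card_image_le.trans (card_neighborFinset_eq_degree G u).le

theorem three_mul_card_cliqueFinset_le_sum [Fintype V] [DecidableRel G.Adj] :
    3 * #(G.cliqueFinset 3) ≤ ∑ e ∈ G.edgeFinset, #{t ∈ G.cliqueFinset 3 | e ∈ t.sym2} := by
  calc 3 * #(G.cliqueFinset 3) ≤ ∑ t ∈ G.cliqueFinset 3, #{e ∈ G.edgeFinset | e ∈ t.sym2} := by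
        rw [mul_comm, ← smul_eq_mul]
        exact card_nsmul_le_sum _ _ _ fun t ht =>
          (mem_cliqueFinset_iff.1 ht).three_le_card_filter_mem_sym2
    _ = ∑ e ∈ G.edgeFinset, #{t ∈ G.cliqueFinset 3 | e ∈ t.sym2} :=
        sum_card_bipartiteAbove_eq_sum_card_bipartiteBelow _

end SimpleGraph

open SimpleGraph

theorem three_mul_triangle_count_le_general
    {V : Type*} [Fintype V] [DecidableEq V] (G : SimpleGraph V) [DecidableRel G.Adj]
    (α : ℕ) (F : Fin α → SimpleGraph V)
    (hforest : ∀ i, (F i).IsAcyclic)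
    (hpart : ∀ e ∈ G.edgeSet, ∃! i, e ∈ (F i).edgeSet) :
    3 * (G.cliqueFinset 3).card ≤ 2 * G.edgeFinset.card * α := by
  classical
  let triangles (e : Sym2 V) : ℕ := #{t ∈ G.cliqueFinset 3 | e ∈ t.sym2}
  have hcover : ∀ e ∈ G.edgeFinset, ∃ i, e ∈ (F i).edgeSet := fun e he =>
    (hpart e (mem_edgeFinset.1 he)).exists
  have hforest_sum :
      ∀ i, ∑ e ∈ G.edgeFinset with e ∈ (F i).edgeSet, triangles e ≤ ∑ v, G.degree v :=
    fun i => (hforest i).sum_le_sum_of_subset_edgeSet (fun e he => (mem_filter.1 he).2)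
      fun e he v hv => by
        obtain ⟨u, rfl⟩ := Sym2.mem_iff_exists.1 hv
        exact card_filter_mem_sym2_cliqueFinset_le_degree
          ((F i).ne_of_adj (mem_filter.1 he).2)
  calc 3 * #(G.cliqueFinset 3) ≤ ∑ e ∈ G.edgeFinset, triangles e :=
        three_mul_card_cliqueFinset_le_sum
    _ ≤ ∑ i, ∑ e ∈ G.edgeFinset with e ∈ (F i).edgeSet, triangles e :=
        sum_le_sum_sum_filter_of_forall_exists hcover _
    _ ≤ ∑ _i : Fin α, ∑ v, G.degree v := sum_le_sum fun i _ => hforest_sum i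
    _ = 2 * #G.edgeFinset * α := by
        rw [sum_const, card_univ, Fintype.card_fin, sum_degrees_eq_twice_card_edges, smul_eq_mul,
          mul_comm]

/-- In a finite simple graph whose edges decompose into `α` forests (arboricity `α`),
three times the number of triangles is at most `2 * m * α`. -/
theorem three_mul_triangle_count_le
    {V : Type*} [Fintype V] [DecidableEq V] (G : SimpleGraph V) [DecidableRel G.Adj]
    (α : ℕ) (F : Fin α → SimpleGraph V)
    (hle : ∀ i, F i ≤ G)
    (hforest : ∀ i, (F i).IsAcyclic)
    (hpart : ∀ e ∈ G.edgeSet, ∃! i, e ∈ (F i).edgeSet) :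
    3 * (G.cliqueFinset 3).card ≤ 2 * G.edgeFinset.card * α :=
  three_mul_triangle_count_le_general G α F hforest hpart
end

section
/- For each edge {u,v} of a finite simple graph, the number of wedges (paths of length 2) whose middle vertex is an endpoint of minimal degree among {u,v} and which use the edge {u,v} is at most min(deg(u), deg(v)) − 1; summing over all edges, the total count of such wedges is at most 2·m·α when the graph has arboricity α. -/
open Finset

namespace SimpleGraph

variable {V : Type*} {G : SimpleGraph V}

theorem IsAcyclic.eq_of_dist_eq_dist_add_one (hG : G.IsAcyclic) {u x y₁ y₂ : V}
    (hux : G.Reachable u x) (h₁ : G.Adj y₁ x) (h₂ : G.Adj y₂ x)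
    (hd₁ : G.dist u x = G.dist u y₁ + 1) (hd₂ : G.dist u x = G.dist u y₂ + 1) : y₁ = y₂ := by
  obtain ⟨q₁, hq₁⟩ := (hux.trans h₁.symm.reachable).exists_walk_length_eq_dist
  obtain ⟨q₂, hq₂⟩ := (hux.trans h₂.symm.reachable).exists_walk_length_eq_dist
  have hp₁ : (q₁.concat h₁).IsPath := Walk.isPath_of_length_eq_dist _ (by simp [hq₁, hd₁])
  have hp₂ : (q₂.concat h₂).IsPath := Walk.isPath_of_length_eq_dist _ (by simp [hq₂, hd₂])
  have hq : q₁.concat h₁ = q₂.concat h₂ :=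
    congrArg Subtype.val ((hG.subsingleton_path u x).elim ⟨_, hp₁⟩ ⟨_, hp₂⟩)
  simpa only [Walk.penultimate_concat] using congrArg Walk.penultimate hq

theorem IsAcyclic.exists_injOn_mem_edgeSet (hG : G.IsAcyclic) :
    ∃ f : Sym2 V → V, (∀ e ∈ G.edgeSet, f e ∈ e) ∧ Set.InjOn f G.edgeSet := by
  let root : V → V := fun v => (G.connectedComponentMk v).out
  have root_reachable (v : V) : G.Reachable (root v) v :=
    ConnectedComponent.exact (G.connectedComponentMk v).out_eq
  have root_adj {x y : V} (h : G.Adj x y) : root x = root y := by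
    simp only [root, ConnectedComponent.connectedComponentMk_eq_of_adj h]
  have orient (e : Sym2 V) : ∃ x y, s(y, x) = e ∧
      (e ∈ G.edgeSet → G.Adj y x ∧ G.dist (root x) x = G.dist (root x) y + 1) := by
    induction e using Sym2.ind with
    | _ a b =>
      by_cases hab : G.Adj a b
      · rcases hG.dist_eq_dist_add_one_of_adj_of_reachable (root a) hab (root_reachable a) with
          h | h
        · exact ⟨a, b, Sym2.eq_swap, fun _ => ⟨hab.symm, h⟩⟩
        · exact ⟨b, a, rfl, fun _ => ⟨hab, root_adj hab ▸ h⟩⟩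
      · exact ⟨b, a, rfl, fun h => absurd h hab⟩
  choose head tail hedge horient using orient
  refine ⟨head, fun e _ => by simpa only [hedge] using Sym2.mem_mk_right (tail e) (head e),
    fun e₁ he₁ e₂ he₂ heq => ?_⟩
  obtain ⟨hadj₁, hdist₁⟩ := horient e₁ he₁
  obtain ⟨hadj₂, hdist₂⟩ := horient e₂ he₂
  have htail : tail e₁ = tail e₂ :=
    hG.eq_of_dist_eq_dist_add_one (root_reachable (head e₁)) hadj₁ (heq ▸ hadj₂) hdist₁
      (heq ▸ hdist₂)
  rw [← hedge e₁, ← hedge e₂, heq, htail]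

variable [Fintype V] [DecidableRel G.Adj]

theorem card_filter_neighborFinset_ne_edge [DecidableEq V] {e : Sym2 V} {w : V}
    (he : e ∈ G.edgeSet) (hw : w ∈ e) :
    #{c ∈ G.neighborFinset w | s(w, c) ≠ e} = G.degree w - 1 := by
  have hspec : s(w, Sym2.Mem.other hw) = e := Sym2.other_spec hw
  have hadj : G.Adj w (Sym2.Mem.other hw) := by rwa [← mem_edgeSet, hspec]
  have hfilter : {c ∈ G.neighborFinset w | s(w, c) ≠ e} =
      (G.neighborFinset w).erase (Sym2.Mem.other hw) := by
    ext c
    have hc : s(w, c) = e ↔ c = Sym2.Mem.other hw := by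
      rw [← Sym2.congr_right (a := w), hspec]
    rw [mem_filter, mem_erase, Ne, hc, and_comm]
  rw [hfilter, card_erase_of_mem (by rwa [mem_neighborFinset]), card_neighborFinset_eq_degree]

end SimpleGraph

open SimpleGraph

section

variable {V : Type*} [Fintype V] {G : SimpleGraph V} [DecidableRel G.Adj]

theorem minDeg_le_degree_of_mem {e : Sym2 V} {x : V} (hx : x ∈ e) : minDeg G e ≤ G.degree x := by
  induction e using Sym2.ind with
  | _ a b =>
    rcases Sym2.mem_iff.mp hx with rfl | rfl
    · exact min_le_left _ _
    · exact min_le_right _ _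

theorem SimpleGraph.IsAcyclic.sum_minDeg_le {H : SimpleGraph V} (hH : H.IsAcyclic)
    {s : Finset (Sym2 V)} (hs : ∀ e ∈ s, e ∈ H.edgeSet) :
    ∑ e ∈ s, minDeg G e ≤ 2 * #G.edgeFinset := by
  classical
  obtain ⟨f, hf_mem, hf_inj⟩ := hH.exists_injOn_mem_edgeSet
  calc ∑ e ∈ s, minDeg G e
      ≤ ∑ e ∈ s, G.degree (f e) :=
        sum_le_sum fun e he => minDeg_le_degree_of_mem (hf_mem e (hs e he))
    _ = ∑ v ∈ s.image f, G.degree v := by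
        rw [sum_image fun a ha b hb hab => hf_inj (hs a ha) (hs b hb) hab]
    _ ≤ ∑ v, G.degree v := sum_le_sum_of_subset (subset_univ _)
    _ = 2 * #G.edgeFinset := G.sum_degrees_eq_twice_card_edges

theorem sum_minDeg_le_of_forest_cover {α : ℕ} (F : Fin α → SimpleGraph V)
    (hforest : ∀ i, (F i).IsAcyclic) (hcover : ∀ e ∈ G.edgeSet, ∃ i, e ∈ (F i).edgeSet) :
    ∑ e ∈ G.edgeFinset, minDeg G e ≤ 2 * #G.edgeFinset * α := by
  classical
  calc ∑ e ∈ G.edgeFinset, minDeg G e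
      ≤ ∑ e ∈ G.edgeFinset, ∑ i, if e ∈ (F i).edgeSet then minDeg G e else 0 :=
        sum_le_sum fun e he => by
          obtain ⟨i, hi⟩ := hcover e (mem_edgeFinset.mp he)
          simpa [hi] using single_le_sum (f := fun i => if e ∈ (F i).edgeSet then minDeg G e else 0)
            (fun _ _ => Nat.zero_le _) (mem_univ i)
    _ = ∑ i, ∑ e ∈ G.edgeFinset with e ∈ (F i).edgeSet, minDeg G e := by
        rw [sum_comm]
        simp only [sum_filter]
    _ ≤ ∑ _i : Fin α, 2 * #G.edgeFinset :=
        sum_le_sum fun i _ => (hforest i).sum_minDeg_le fun e he => (mem_filter.mp he).2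
    _ = 2 * #G.edgeFinset * α := by simp [mul_comm]

end

theorem wedge_count_per_edge_and_total_general
    {V : Type*} [Fintype V] [DecidableEq V] (G : SimpleGraph V) [DecidableRel G.Adj]
    (α : ℕ) (F : Fin α → SimpleGraph V)
    (hforest : ∀ i, (F i).IsAcyclic)
    (hpart : ∀ e ∈ G.edgeSet, ∃! i, e ∈ (F i).edgeSet)
    (w : Sym2 V → V)
    (hw : ∀ e ∈ G.edgeFinset, w e ∈ e)
    (hwmin : ∀ e ∈ G.edgeFinset, G.degree (w e) = minDeg G e) :
    (∀ e ∈ G.edgeFinset,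
        ((G.neighborFinset (w e)).filter (fun c => s(w e, c) ≠ e)).card ≤ minDeg G e - 1) ∧
      ∑ e ∈ G.edgeFinset,
          ((G.neighborFinset (w e)).filter (fun c => s(w e, c) ≠ e)).card ≤
        2 * G.edgeFinset.card * α := by
  have per_edge : ∀ e ∈ G.edgeFinset,
      ((G.neighborFinset (w e)).filter (fun c => s(w e, c) ≠ e)).card = minDeg G e - 1 :=
    fun e he => by
      rw [card_filter_neighborFinset_ne_edge (mem_edgeFinset.mp he) (hw e he), hwmin e he]
  refine ⟨fun e he => (per_edge e he).le, ?_⟩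
  calc ∑ e ∈ G.edgeFinset, ((G.neighborFinset (w e)).filter (fun c => s(w e, c) ≠ e)).card
      ≤ ∑ e ∈ G.edgeFinset, minDeg G e :=
        sum_le_sum fun e he => (per_edge e he).trans_le (Nat.sub_le _ _)
    _ ≤ 2 * G.edgeFinset.card * α :=
        sum_minDeg_le_of_forest_cover F hforest fun e he => (hpart e he).exists

/-- For each edge `e` of `G`, the number of wedges using `e` whose middle vertex is a
minimum-degree endpoint `w e` of `e` is at most `min(deg u, deg v) - 1`; summing over
all edges, if the edges of `G` decompose into `α` forests then the total count of such
wedges is at most `2 * m * α`. -/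
theorem wedge_count_per_edge_and_total
    {V : Type*} [Fintype V] [DecidableEq V] (G : SimpleGraph V) [DecidableRel G.Adj]
    (α : ℕ) (F : Fin α → SimpleGraph V)
    (hle : ∀ i, F i ≤ G)
    (hforest : ∀ i, (F i).IsAcyclic)
    (hpart : ∀ e ∈ G.edgeSet, ∃! i, e ∈ (F i).edgeSet)
    (w : Sym2 V → V)
    (hw : ∀ e ∈ G.edgeFinset, w e ∈ e)
    (hwmin : ∀ e ∈ G.edgeFinset, G.degree (w e) = minDeg G e) :
    (∀ e ∈ G.edgeFinset,
        ((G.neighborFinset (w e)).filter (fun c => s(w e, c) ≠ e)).card ≤ minDeg G e - 1) ∧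
      ∑ e ∈ G.edgeFinset,
          ((G.neighborFinset (w e)).filter (fun c => s(w e, c) ≠ e)).card ≤
        2 * G.edgeFinset.card * α :=
  wedge_count_per_edge_and_total_general G α F hforest hpart w hw hwmin
end
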